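/- Every point of the set X² = {(z,x,s) ∈ {0,1}² × ℝ₊³ : (x₁-x₂)² ≤ s, x₁(1-z₁) = 0, x₂(1-z₂) = 0} satisfies the inequality f(z,x) ≤ s, where f(z,x) = (x₁-x₂)²/z₁ if x₁ ≥ x₂ and (x₁-x₂)²/z₂ if x₁ ≤ x₂ (with 0/0 = 0 and a/0 = ∞ for a > 0). -/

import Mathlib

/-- Division with the convention `a/0 = ∞` if `a > 0` and `0/0 = 0`. -/
noncomputable def pdiv (a b : ℝ) : EReal :=
  if 0 < b then ((a / b : ℝ) : EReal) else if 0 < a then ⊤ else 0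

/-- The function `f` on `[0,1]² × ℝ₊²`. -/
noncomputable def f2 (z₁ z₂ x₁ x₂ : ℝ) : EReal :=
  if x₂ ≤ x₁ then pdiv ((x₁ - x₂)^2) z₁ else pdiv ((x₁ - x₂)^2) z₂

/-! Where the active indicator `z` vanishes, the complementarity constraint forces the larger
coordinate, and with it the whole difference, to be `0`, so `f` takes the value `0/0 = 0`;
where `z = 1`, `f` is the quadratic itself. -/

theorem pdiv_zero_left (b : ℝ) : pdiv 0 b = 0 := by
  simp [pdiv]

theorem pdiv_one (a : ℝ) : pdiv a 1 = a := by
  simp [pdiv]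

theorem pdiv_le_of_binary {a b s : ℝ} (hb : b = 0 ∨ b = 1) (ha : b = 0 → a = 0)
    (has : a ≤ s) : pdiv a b ≤ s := by
  rcases hb with rfl | rfl
  · rw [ha rfl] at has ⊢
    rw [pdiv_zero_left]
    exact_mod_cast has
  · rw [pdiv_one]
    exact_mod_cast has

theorem sub_sq_eq_zero_of_mul_one_sub_eq_zero {x y z : ℝ} (hy : 0 ≤ y) (hyx : y ≤ x)
    (hc : x * (1 - z) = 0) (hz : z = 0) : (x - y) ^ 2 = 0 := by
  have hx : x = 0 := by simpa [hz] using hc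
  have hy' : y = 0 := le_antisymm (hx ▸ hyx) hy
  simp [hx, hy']

theorem f2_valid_on_X2_general (z₁ z₂ x₁ x₂ s : ℝ)
    (hz₁ : z₁ = 0 ∨ z₁ = 1) (hz₂ : z₂ = 0 ∨ z₂ = 1)
    (hx₁ : 0 ≤ x₁) (hx₂ : 0 ≤ x₂)
    (hq : (x₁ - x₂)^2 ≤ s)
    (hc₁ : x₁ * (1 - z₁) = 0) (hc₂ : x₂ * (1 - z₂) = 0) :
    f2 z₁ z₂ x₁ x₂ ≤ (s : EReal) := by
  unfold f2
  split_ifs with h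
  · exact pdiv_le_of_binary hz₁ (sub_sq_eq_zero_of_mul_one_sub_eq_zero hx₂ h hc₁) hq
  · have hdiff : z₂ = 0 → (x₂ - x₁) ^ 2 = 0 :=
      sub_sq_eq_zero_of_mul_one_sub_eq_zero hx₁ (le_of_not_ge h) hc₂
    rw [← neg_sub, neg_sq] at hq ⊢
    exact pdiv_le_of_binary hz₂ hdiff hq

/-- Every point of `X²` satisfies `f(z,x) ≤ s`. -/
theorem f2_valid_on_X2 (z₁ z₂ x₁ x₂ s : ℝ)
    (hz₁ : z₁ = 0 ∨ z₁ = 1) (hz₂ : z₂ = 0 ∨ z₂ = 1)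
    (hx₁ : 0 ≤ x₁) (hx₂ : 0 ≤ x₂) (hs : 0 ≤ s)
    (hq : (x₁ - x₂)^2 ≤ s)
    (hc₁ : x₁ * (1 - z₁) = 0) (hc₂ : x₂ * (1 - z₂) = 0) :
    f2 z₁ z₂ x₁ x₂ ≤ (s : EReal) :=
  f2_valid_on_X2_general z₁ z₂ x₁ x₂ s hz₁ hz₂ hx₁ hx₂ hq hc₁ hc₂
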